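/- Let A and B be finite types with A nonempty, let b₀ ∈ B, and let W be a unitary on EuclideanSpace ℂ (A × B). Suppose that ‖(⟨e_a| ⊗ I)(W(e_a ⊗ e_{b₀}))‖ = 1 for every a ∈ A, and that ‖(⟨(e_a + e_{a'})/√2| ⊗ I)(W(((e_a + e_{a'})/√2) ⊗ e_{b₀}))‖ = 1 for all a, a' ∈ A with a ≠ a'. Then there exists a single unit vector χ ∈ EuclideanSpace ℂ B such that W(ψ ⊗ e_{b₀}) = ψ ⊗ χ for every ψ ∈ EuclideanSpace ℂ A. (The exact, zero-error case of the standard-basis check plus coherency check in the paper's QCMA protocol for UMCSP: passing both tests perfectly certifies that the tested operation acts as the identity on the data register, up to a fixed pure ancilla state.) -/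

import Mathlib

/-- Pure tensor: `(u ⊗ w)(a, b) = u a * w b`. -/
def tens {A B : Type*} (u : EuclideanSpace ℂ A) (w : EuclideanSpace ℂ B) :
    EuclideanSpace ℂ (A × B) :=
  WithLp.toLp 2 (fun p => u p.1 * w p.2)

/-- Partial inner product: `(⟨u|⊗I)v (b) = Σ_a conj (u a) * v (a, b)`. -/
noncomputable def pinner {A B : Type*} [Fintype A] (u : EuclideanSpace ℂ A)
    (v : EuclideanSpace ℂ (A × B)) : EuclideanSpace ℂ B :=
  WithLp.toLp 2 (fun b => ∑ a, (starRingEnd ℂ) (u a) * v (a, b))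

/-!
The unit vector `v = W (e_a ⊗ e_{b₀})` satisfies `‖v‖² = Σ_x ‖(⟨e_x|⊗I) v‖²`, so the basis test
forces `v = e_a ⊗ χ_a` with `χ_a` a unit vector. By linearity the coherency test for `a ≠ a'` then
reads `‖(χ_a + χ_{a'}) / 2‖ = 1`, and strict convexity of the norm gives `χ_a = χ_{a'}`. A linear
map agreeing with `ψ ↦ ψ ⊗ χ` on the basis agrees with it everywhere.
-/

open EuclideanSpace

section

variable {A B : Type*}

def tensRight (w : EuclideanSpace ℂ B) :
    EuclideanSpace ℂ A →ₗ[ℂ] EuclideanSpace ℂ (A × B) where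
  toFun u := tens u w
  map_add' u u' := by ext p; simp [tens, add_mul]
  map_smul' c u := by ext p; simp [tens, mul_assoc]

@[simp]
lemma tensRight_apply (w : EuclideanSpace ℂ B) (u : EuclideanSpace ℂ A) :
    tensRight w u = tens u w := rfl

lemma norm_tens [Fintype A] [Fintype B] (u : EuclideanSpace ℂ A) (w : EuclideanSpace ℂ B) :
    ‖tens u w‖ = ‖u‖ * ‖w‖ := by
  have hsq : ‖tens u w‖ ^ 2 = (‖u‖ * ‖w‖) ^ 2 := by
    simp only [mul_pow, norm_sq_eq, Fintype.sum_prod_type, Finset.sum_mul_sum, tens, norm_mul]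
  exact (pow_left_inj₀ (norm_nonneg _) (by positivity) two_ne_zero).mp hsq

lemma map_tens_of_forall_single [Fintype A] [DecidableEq A] {B' : Type*}
    (W : EuclideanSpace ℂ (A × B) →ₗ[ℂ] EuclideanSpace ℂ (A × B'))
    {w : EuclideanSpace ℂ B} {χ : EuclideanSpace ℂ B'}
    (h : ∀ a, W (tens (single a 1) w) = tens (single a 1) χ) (ψ : EuclideanSpace ℂ A) :
    W (tens ψ w) = tens ψ χ := by
  have : W ∘ₗ tensRight w = tensRight χ :=
    (EuclideanSpace.basisFun A ℂ).toBasis.ext fun a => by simpa using h a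
  exact LinearMap.congr_fun this ψ

section pinner

variable [Fintype A]

lemma pinner_single_apply [DecidableEq A] (a : A) (v : EuclideanSpace ℂ (A × B)) (b : B) :
    pinner (single a 1) v b = v (a, b) := by
  simp [pinner, PiLp.single_apply, apply_ite (starRingEnd ℂ), ite_mul]

lemma pinner_tens (u w : EuclideanSpace ℂ A) (χ : EuclideanSpace ℂ B) :
    pinner u (tens w χ) = inner ℂ u w • χ := by
  ext b
  simp only [pinner, tens, PiLp.smul_apply, PiLp.inner_apply, RCLike.inner_apply, smul_eq_mul,
    Finset.sum_mul]
  exact Finset.sum_congr rfl fun _ _ => by ring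

lemma pinner_add_right (u : EuclideanSpace ℂ A) (v v' : EuclideanSpace ℂ (A × B)) :
    pinner u (v + v') = pinner u v + pinner u v' := by
  ext b
  simp [pinner, mul_add, Finset.sum_add_distrib]

lemma pinner_smul_right (c : ℂ) (u : EuclideanSpace ℂ A) (v : EuclideanSpace ℂ (A × B)) :
    pinner u (c • v) = c • pinner u v := by
  ext b
  simp [pinner, Finset.mul_sum, mul_left_comm]

lemma norm_sq_eq_sum_norm_sq_pinner_single [DecidableEq A] [Fintype B]
    (v : EuclideanSpace ℂ (A × B)) :
    ‖v‖ ^ 2 = ∑ a, ‖pinner (single a 1) v‖ ^ 2 := by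
  simp only [norm_sq_eq, Fintype.sum_prod_type, pinner_single_apply]

lemma eq_tens_pinner_single_of_norm_eq [DecidableEq A] [Fintype B]
    {v : EuclideanSpace ℂ (A × B)} {a : A} (h : ‖pinner (single a 1) v‖ = ‖v‖) :
    v = tens (single a 1) (pinner (single a 1) v) := by
  have hrest : ∑ x ∈ Finset.univ.erase a, ‖pinner (single x 1) v‖ ^ 2 = 0 := by
    have := norm_sq_eq_sum_norm_sq_pinner_single v
    rw [← Finset.add_sum_erase _ _ (Finset.mem_univ a), h] at this
    linarith
  have hzero : ∀ x ≠ a, pinner (single x 1) v = 0 := fun x hx => by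
    simpa using (Finset.sum_eq_zero_iff_of_nonneg (fun _ _ => sq_nonneg _)).mp hrest x
      (Finset.mem_erase.mpr ⟨hx, Finset.mem_univ x⟩)
  ext ⟨x, b⟩
  rcases eq_or_ne x a with rfl | hx
  · simp [tens, pinner_single_apply]
  · simpa [tens, pinner_single_apply, hx] using congr($(hzero x hx) b)

end pinner

lemma eq_of_norm_pinner_coherent [Fintype A] [DecidableEq A] {B' : Type*} [Fintype B']
    (W : EuclideanSpace ℂ (A × B) →ₗ[ℂ] EuclideanSpace ℂ (A × B'))
    {w : EuclideanSpace ℂ B} {a a' : A} (hne : a ≠ a') {χ χ' : EuclideanSpace ℂ B'}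
    (hχ : ‖χ‖ = 1) (hχ' : ‖χ'‖ = 1)
    (hW : W (tens (single a 1) w) = tens (single a 1) χ)
    (hW' : W (tens (single a' 1) w) = tens (single a' 1) χ')
    (hcoh : ‖pinner ((Real.sqrt 2)⁻¹ • (single a 1 + single a' 1))
        (W (tens ((Real.sqrt 2)⁻¹ • (single a 1 + single a' 1)) w))‖ = 1) :
    χ = χ' := by
  set r : ℝ := (Real.sqrt 2)⁻¹
  have hr : r * r = 2⁻¹ := by
    rw [← mul_inv, Real.mul_self_sqrt zero_le_two]
  have hpinner : pinner (r • (single a 1 + single a' 1))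
      (W (tens (r • (single a 1 + single a' 1)) w)) = (r * r) • (χ + χ') := by
    rw [← Complex.coe_smul, ← tensRight_apply, ← LinearMap.comp_apply, map_smul, map_add]
    simp only [LinearMap.comp_apply, tensRight_apply, hW, hW', pinner_smul_right, pinner_add_right,
      pinner_tens]
    simp [inner_single_left, hne, hne.symm, smul_smul, smul_add]
  have hadd : ‖χ + χ'‖ = ‖χ‖ + ‖χ'‖ := by
    rw [hpinner, hr, norm_smul] at hcoh
    norm_num at hcoh
    linarith
  exact eq_of_norm_eq_of_norm_add_eq (hχ.trans hχ'.symm) hadd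

end

/-- The exact, zero-error case of the standard-basis check plus coherency
check: passing both tests perfectly certifies the tested unitary acts as the
identity on the data register, up to a fixed pure ancilla state `χ`. -/
theorem exact_coherency_certifies_identity {A B : Type*} [Fintype A] [Fintype B]
    [DecidableEq A] [DecidableEq B] [Nonempty A] (b₀ : B)
    (W : EuclideanSpace ℂ (A × B) ≃ₗᵢ[ℂ] EuclideanSpace ℂ (A × B))
    (hbasis : ∀ a : A,
      ‖pinner (EuclideanSpace.single a 1)
        (W (tens (EuclideanSpace.single a 1) (EuclideanSpace.single b₀ 1)))‖ = 1)
    (hcoh : ∀ a a' : A, a ≠ a' →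
      ‖pinner ((Real.sqrt 2)⁻¹ •
            (EuclideanSpace.single a 1 + EuclideanSpace.single a' 1))
        (W (tens ((Real.sqrt 2)⁻¹ •
            (EuclideanSpace.single a 1 + EuclideanSpace.single a' 1))
          (EuclideanSpace.single b₀ 1)))‖ = 1) :
    ∃ χ : EuclideanSpace ℂ B, ‖χ‖ = 1 ∧
      ∀ ψ : EuclideanSpace ℂ A,
        W (tens ψ (EuclideanSpace.single b₀ 1)) = tens ψ χ := by
  set χ : A → EuclideanSpace ℂ B := fun a =>
    pinner (single a 1) (W (tens (single a 1) (single b₀ 1)))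
  have hW : ∀ a, W (tens (single a 1) (single b₀ 1)) = tens (single a 1) (χ a) := fun a =>
    eq_tens_pinner_single_of_norm_eq <| by simp [hbasis, norm_tens]
  have hχ : ∀ a a', χ a = χ a' := fun a a' => by
    rcases eq_or_ne a a' with rfl | hne
    · rfl
    · exact eq_of_norm_pinner_coherent W.toLinearMap hne (hbasis a) (hbasis a') (hW a) (hW a')
        (hcoh a a' hne)
  obtain ⟨a₀⟩ := ‹Nonempty A›
  exact ⟨χ a₀, hbasis a₀,
    map_tens_of_forall_single W.toLinearMap fun a => (hW a).trans (by rw [hχ a a₀])⟩
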